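/- Let a, b ∈ H² with Re(a) ≠ Re(b). Set u = Im(a·b)/Im(a+b), v = ( 2·a·b − |a|² − |b|² − |a−b|·|a−conj(b)| ) / (2i·Im(a+b)), s = ( 2·a·b − |a|² − |b|² + |a−b|·|a−conj(b)| ) / (2i·Im(a+b)), and m = ( Im(a·b) + i·|a − conj(b)|·√(Im(a)·Im(b)) ) / Im(a+b). Then Re(v) = Re(s) = Re(m) = u; consequently the four points u, s, m, v lie on a common vertical line in ℂ. -/

import Mathlib

/-!
Dividing by the purely imaginary number `2i·Im(a+b)` turns imaginary parts into real parts, so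
`Re v` and `Re s` only see `Im(2ab) = 2·Im(ab)`: the terms `|a|²`, `|b|²` and `|a-b|·|a-conj b|`
are real and drop out. In `m` the radical term is purely imaginary and the denominator is real,
so it drops out of the real part as well.
-/

open Complex ComplexConjugate

theorem Complex.re_div_two_mul_I_mul_ofReal (z : ℂ) (t : ℝ) :
    (z / (2 * I * t)).re = z.im / (2 * t) := by
  rw [div_re]
  simp only [mul_re, re_ofNat, I_re, mul_zero, im_ofNat, I_im, mul_one, sub_self, ofReal_re,
    zero_mul, mul_im, add_zero, ofReal_im, normSq_apply, zero_add, zero_div]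
  field_simp

theorem Complex.re_ofReal_add_I_mul_ofReal_div_ofReal (x y t : ℝ) :
    ((x + I * y) / t).re = x / t := by
  simp [div_ofReal_re]

theorem collinear_points_u_s_m_v (a b : ℂ)
    (u : ℝ) (hu : u = (a * b).im / (a + b).im)
    (v s m : ℂ)
    (hv : v = (2 * a * b - ((‖a‖ ^ 2 : ℝ) : ℂ) - ((‖b‖ ^ 2 : ℝ) : ℂ) -
        ((‖a - b‖ * ‖a - conj b‖ : ℝ) : ℂ)) /
        (2 * Complex.I * (((a + b).im : ℝ) : ℂ)))
    (hs : s = (2 * a * b - ((‖a‖ ^ 2 : ℝ) : ℂ) - ((‖b‖ ^ 2 : ℝ) : ℂ) +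
        ((‖a - b‖ * ‖a - conj b‖ : ℝ) : ℂ)) /
        (2 * Complex.I * (((a + b).im : ℝ) : ℂ)))
    (hm : m = ((((a * b).im : ℝ) : ℂ) +
        Complex.I * ((‖a - conj b‖ * Real.sqrt (a.im * b.im) : ℝ) : ℂ)) /
        ((((a + b).im : ℝ) : ℂ))) :
    v.re = u ∧ s.re = u ∧ m.re = u := by
  have him : (2 * a * b).im = 2 * (a * b).im := by simp [mul_assoc]
  subst hu hv hs hm
  refine ⟨?_, ?_, re_ofReal_add_I_mul_ofReal_div_ofReal _ _ _⟩ <;>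
  · rw [re_div_two_mul_I_mul_ofReal]
    simp only [sub_im, add_im, ofReal_im, sub_zero, add_zero, him]
    exact mul_div_mul_left _ _ two_ne_zero
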